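/- arXiv:1012.5598 — 7 statements merged into one kernel-verified Lean document; each statement's English description precedes it below -/
import Mathlib

section
/- If an LA-semigroup S has a right identity e (a*e = a for all a), then S is a commutative semigroup (the operation is commutative and associative). -/
section LeftInvertive

variable {S : Type*} [Mul S]

theorem mul_comm_of_left_invertive_of_mul_right_id
    (linv : ∀ a b c : S, (a * b) * c = (c * b) * a) (e : S) (he : ∀ a : S, a * e = a)
    (a b : S) : a * b = b * a :=
  calc a * b = (a * e) * b := by rw [he]
    _ = (b * e) * a := linv a e b
    _ = b * a := by rw [he]

theorem mul_assoc_of_left_invertive_of_comm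
    (linv : ∀ a b c : S, (a * b) * c = (c * b) * a) (comm : ∀ a b : S, a * b = b * a)
    (a b c : S) : (a * b) * c = a * (b * c) :=
  calc (a * b) * c = (c * b) * a := linv a b c
    _ = a * (c * b) := comm _ _
    _ = a * (b * c) := by rw [comm c b]

end LeftInvertive

/-- An LA-semigroup with a right identity is a commutative semigroup. -/
theorem la_semigroup_right_identity_comm_assoc {S : Type*} [Mul S]
    (linv : ∀ a b c : S, (a * b) * c = (c * b) * a)
    (e : S) (he : ∀ a : S, a * e = a) :
    (∀ a b : S, a * b = b * a) ∧ (∀ a b c : S, (a * b) * c = a * (b * c)) := by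
  have comm := mul_comm_of_left_invertive_of_mul_right_id linv e he
  exact ⟨comm, mul_assoc_of_left_invertive_of_comm linv comm⟩
end

section
/- If S is an LA-semigroup with left identity in which every element is left invertible (for each a there is x with xa = e), then S is intra-regular: for every a ∈ S there exist u, v ∈ S with a = (u·a²)·v. -/
theorem eq_mul_mul_self_mul_of_mul_eq {S : Type*} [Mul S]
    (linv : ∀ a b c : S, (a * b) * c = (c * b) * a)
    {e : S} (he : ∀ a : S, e * a = a) {a x : S} (hx : x * a = e) :
    a = (x * (a * a)) * e :=
  calc a = e * a := (he a).symm
    _ = (x * a) * a := by rw [hx]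
    _ = (a * a) * x := linv x a a
    _ = (e * (a * a)) * x := by rw [he]
    _ = (x * (a * a)) * e := linv e (a * a) x

/-- A left invertible LA-semigroup with left identity is intra-regular. -/
theorem left_invertible_intra_regular {S : Type*} [Mul S]
    (linv : ∀ a b c : S, (a * b) * c = (c * b) * a)
    (e : S) (he : ∀ a : S, e * a = a)
    (hinv : ∀ a : S, ∃ x : S, x * a = e) :
    ∀ a : S, ∃ u v : S, a = (u * (a * a)) * v := by
  intro a
  obtain ⟨x, hx⟩ := hinv a
  exact ⟨x, e, eq_mul_mul_self_mul_of_mul_eq linv he hx⟩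
end

section
/- If S is an LA-semigroup such that Sa = S for all a ∈ S (i.e., for every a, b ∈ S there is s with s·a = b), then S is intra-regular. -/
theorem Sa_eq_S_intra_regular_general {S : Type*} [Mul S]
    (h : ∀ a b : S, ∃ s : S, s * a = b) :
    ∀ a : S, ∃ x y : S, a = (x * (a * a)) * y := by
  intro a
  obtain ⟨e, he⟩ := h a a
  obtain ⟨x, hx⟩ := h (a * a) e
  exact ⟨x, a, by rw [hx, he]⟩

/-- If Sa = S for all a, then the LA-semigroup S is intra-regular. -/
theorem Sa_eq_S_intra_regular {S : Type*} [Mul S]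
    (linv : ∀ a b c : S, (a * b) * c = (c * b) * a)
    (h : ∀ a b : S, ∃ s : S, s * a = b) :
    ∀ a : S, ∃ x y : S, a = (x * (a * a)) * y :=
  Sa_eq_S_intra_regular_general h
end

section
/- If S is an intra-regular LA-semigroup with left identity and B is a generalized bi-ideal of S (i.e., (BS)B ⊆ B), then (BS)B = B. -/
/-!
Using the medial law and `a (b c) = b (a c)`, intra-regularity `b = (x b²) y` becomes `b = b² w`.
The left invertive law turns this into `b = (w b) b`, and substituting `b = (w b) b` once more
shows `w b = b ((w w) b) ∈ b S`.
-/

open Pointwise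

namespace LASemigroup

variable {S : Type*} [Mul S]

theorem medial (linv : ∀ a b c : S, a * b * c = c * b * a) (a b c d : S) :
    a * b * (c * d) = a * c * (b * d) := by
  rw [linv a b (c * d), linv c d b, linv (b * d) c a]

theorem mul_left_comm (linv : ∀ a b c : S, a * b * c = c * b * a) {e : S}
    (he : ∀ a : S, e * a = a) (a b c : S) : a * (b * c) = b * (a * c) := by
  calc a * (b * c) = e * a * (b * c) := by rw [he]
    _ = e * b * (a * c) := medial linv _ _ _ _
    _ = b * (a * c) := by rw [he]

theorem eq_mul_self_mul_of_eq_mul_mul_self_mul (linv : ∀ a b c : S, a * b * c = c * b * a)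
    {e : S} (he : ∀ a : S, e * a = a) {b x y : S} (hb : b = x * (b * b) * y) :
    b = b * b * (x * e * y) := by
  calc b = x * (b * b) * (e * y) := by rw [he, ← hb]
    _ = x * e * (b * b * y) := medial linv _ _ _ _
    _ = b * b * (x * e * y) := mul_left_comm linv he _ _ _

theorem eq_mul_mul_self_of_eq_mul_self_mul (linv : ∀ a b c : S, a * b * c = c * b * a)
    {e : S} (he : ∀ a : S, e * a = a) {b w : S} (hb : b = b * b * w) :
    b = b * (w * w * b) * b := by
  have hwb : w * b = b * (w * w * b) := by
    calc w * b = w * (w * b * b) := by rw [← linv, ← hb]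
      _ = w * b * (w * b) := mul_left_comm linv he _ _ _
      _ = w * w * (b * b) := medial linv _ _ _ _
      _ = b * (w * w * b) := mul_left_comm linv he _ _ _
  calc b = w * b * b := by rw [← linv, ← hb]
    _ = b * (w * w * b) * b := by rw [hwb]

end LASemigroup

theorem gen_bi_ideal_eq_general {S : Type*} [Mul S]
    (linv : ∀ a b c : S, (a * b) * c = (c * b) * a)
    (e : S) (he : ∀ a : S, e * a = a)
    (hintra : ∀ a : S, ∃ x y : S, a = (x * (a * a)) * y)
    (B : Set S)
    (hB : (B * (Set.univ : Set S)) * B ⊆ B) :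
    (B * (Set.univ : Set S)) * B = B := by
  refine hB.antisymm fun b hb => ?_
  obtain ⟨x, y, hxy⟩ := hintra b
  rw [LASemigroup.eq_mul_mul_self_of_eq_mul_self_mul linv he
    (LASemigroup.eq_mul_self_mul_of_eq_mul_mul_self_mul linv he hxy)]
  exact Set.mul_mem_mul (Set.mul_mem_mul hb (Set.mem_univ _)) hb

/-- In an intra-regular LA-semigroup with left identity, a generalized
bi-ideal B satisfies (BS)B = B. -/
theorem gen_bi_ideal_eq {S : Type*} [Mul S]
    (linv : ∀ a b c : S, (a * b) * c = (c * b) * a)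
    (e : S) (he : ∀ a : S, e * a = a)
    (hintra : ∀ a : S, ∃ x y : S, a = (x * (a * a)) * y)
    (B : Set S) (hBne : B.Nonempty)
    (hB : (B * (Set.univ : Set S)) * B ⊆ B) :
    (B * (Set.univ : Set S)) * B = B :=
  gen_bi_ideal_eq_general linv e he hintra B hB
end

section
/- If S is an intra-regular LA-semigroup with left identity and B is an interior ideal of S (i.e., (SB)S ⊆ B), then (SB)S = B. -/
open Pointwise

/-
Write `b = (x b²) y`. The left invertive law and the left identity turn `x b²` into
`((x b) b) e`, which lies in `(S B) S ⊆ B`; since `b = (e · ((x b) b) e) y`, `b ∈ (S B) S`.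
-/

section LeftInvertive

variable {S : Type*} [Mul S]

theorem mul_mul_eq_mul_mul_mul_of_left_invertive
    (linv : ∀ a b c : S, (a * b) * c = (c * b) * a) {e : S} (he : ∀ a : S, e * a = a)
    (x a b : S) : x * (a * b) = ((x * b) * a) * e := by
  calc x * (a * b) = (e * x) * (a * b) := by rw [he]
    _ = ((a * b) * x) * e := linv _ _ _
    _ = ((x * b) * a) * e := by rw [linv a b x]

theorem mul_mul_mem_univ_mul_mul_univ {B : Set S} {b : S} (hb : b ∈ B) (s t : S) :
    (s * b) * t ∈ ((Set.univ : Set S) * B) * Set.univ :=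
  Set.mul_mem_mul (Set.mul_mem_mul (Set.mem_univ s) hb) (Set.mem_univ t)

end LeftInvertive

theorem interior_ideal_eq_general {S : Type*} [Mul S]
    (linv : ∀ a b c : S, (a * b) * c = (c * b) * a)
    (e : S) (he : ∀ a : S, e * a = a)
    (hintra : ∀ a : S, ∃ x y : S, a = (x * (a * a)) * y)
    (B : Set S)
    (hB : ((Set.univ : Set S) * B) * (Set.univ : Set S) ⊆ B) :
    ((Set.univ : Set S) * B) * (Set.univ : Set S) = B := by
  refine hB.antisymm fun b hb => ?_
  obtain ⟨x, y, hb_eq⟩ := hintra b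
  have hw : ((x * b) * b) * e ∈ B := hB (mul_mul_mem_univ_mul_mul_univ hb (x * b) e)
  have hb_eq' : b = (e * (((x * b) * b) * e)) * y := by
    rw [he, ← mul_mul_eq_mul_mul_mul_of_left_invertive linv he, ← hb_eq]
  rw [hb_eq']
  exact mul_mul_mem_univ_mul_mul_univ hw e y

/-- In an intra-regular LA-semigroup with left identity, an interior
ideal B satisfies (SB)S = B. -/
theorem interior_ideal_eq {S : Type*} [Mul S]
    (linv : ∀ a b c : S, (a * b) * c = (c * b) * a)
    (e : S) (he : ∀ a : S, e * a = a)
    (hintra : ∀ a : S, ∃ x y : S, a = (x * (a * a)) * y)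
    (B : Set S) (hBne : B.Nonempty)
    (hB : ((Set.univ : Set S) * B) * (Set.univ : Set S) ⊆ B) :
    ((Set.univ : Set S) * B) * (Set.univ : Set S) = B :=
  interior_ideal_eq_general linv e he hintra B hB
end

section
/- If S is an intra-regular LA-semigroup with left identity, then R ∩ L = RL for every right ideal R and left ideal L of S. -/
/-!
Left invertivity gives the medial law, and with a left identity `e` also `a(bc) = b(ac)`
(write `a = ea`). Hence intra-regularity `a = (x a²) y` can be rearranged into
`a = (y (x a)) a`. A right ideal is then a two-sided ideal (`s r = (r s) e`), so for
`a ∈ R ∩ L` the factor `y (x a)` lies in `R` and `a ∈ R L`. The reverse inclusion holds in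
any magma.
-/

open Pointwise Set

section LeftInvertive

variable {S : Type*} [Mul S]

theorem medial_of_leftInvertive (linv : ∀ a b c : S, a * b * c = c * b * a) (a b c d : S) :
    a * b * (c * d) = a * c * (b * d) := by
  rw [linv a b, linv c d, linv (b * d)]

theorem mul_left_comm_of_leftInvertive (linv : ∀ a b c : S, a * b * c = c * b * a)
    {e : S} (he : ∀ a : S, e * a = a) (a b c : S) : a * (b * c) = b * (a * c) :=
  calc a * (b * c) = e * a * (b * c) := by rw [he]
    _ = e * b * (a * c) := medial_of_leftInvertive linv e a b c
    _ = b * (a * c) := by rw [he]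

theorem mul_mem_of_mul_univ_subset (linv : ∀ a b c : S, a * b * c = c * b * a)
    {e : S} (he : ∀ a : S, e * a = a) {R : Set S} (hR : R * univ ⊆ R) (s : S) {r : S}
    (hr : r ∈ R) : s * r ∈ R := by
  have hsr : s * r = r * s * e := by rw [linv, he]
  rw [hsr]
  exact hR (mul_mem_mul (hR (mul_mem_mul hr (mem_univ s))) (mem_univ e))

theorem eq_mul_mul_self_of_eq_mul_sq_mul (linv : ∀ a b c : S, a * b * c = c * b * a)
    {e : S} (he : ∀ a : S, e * a = a) {a x y : S} (hxy : a = x * (a * a) * y) :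
    a = y * (x * a) * a := by
  rwa [mul_left_comm_of_leftInvertive linv he, linv] at hxy

theorem inter_subset_mul_of_intraRegular (linv : ∀ a b c : S, a * b * c = c * b * a)
    {e : S} (he : ∀ a : S, e * a = a) (hintra : ∀ a : S, ∃ x y : S, a = x * (a * a) * y)
    {R L : Set S} (hR : R * univ ⊆ R) : R ∩ L ⊆ R * L := by
  rintro a ⟨haR, haL⟩
  obtain ⟨x, y, hxy⟩ := hintra a
  rw [eq_mul_mul_self_of_eq_mul_sq_mul linv he hxy]
  have hyxa : y * (x * a) ∈ R :=
    mul_mem_of_mul_univ_subset linv he hR y (mul_mem_of_mul_univ_subset linv he hR x haR)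
  exact mul_mem_mul hyxa haL

theorem mul_subset_inter {R L : Set S} (hR : R * univ ⊆ R) (hL : univ * L ⊆ L) :
    R * L ⊆ R ∩ L := by
  rintro _ ⟨r, hr, l, hl, rfl⟩
  exact ⟨hR (mul_mem_mul hr (mem_univ l)), hL (mul_mem_mul (mem_univ r) hl)⟩

end LeftInvertive

theorem inter_eq_prod_general {S : Type*} [Mul S]
    (linv : ∀ a b c : S, (a * b) * c = (c * b) * a)
    (e : S) (he : ∀ a : S, e * a = a)
    (hintra : ∀ a : S, ∃ x y : S, a = (x * (a * a)) * y)
    (R L : Set S) (hR : R * (Set.univ : Set S) ⊆ R)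
    (hL : (Set.univ : Set S) * L ⊆ L) :
    R ∩ L = R * L :=
  (inter_subset_mul_of_intraRegular linv he hintra hR).antisymm (mul_subset_inter hR hL)

/-- In an intra-regular LA-semigroup with left identity, R ∩ L = RL for
every right ideal R and left ideal L. -/
theorem inter_eq_prod {S : Type*} [Mul S]
    (linv : ∀ a b c : S, (a * b) * c = (c * b) * a)
    (e : S) (he : ∀ a : S, e * a = a)
    (hintra : ∀ a : S, ∃ x y : S, a = (x * (a * a)) * y)
    (R L : Set S) (hRne : R.Nonempty) (hR : R * (Set.univ : Set S) ⊆ R)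
    (hLne : L.Nonempty) (hL : (Set.univ : Set S) * L ⊆ L) :
    R ∩ L = R * L :=
  inter_eq_prod_general linv e he hintra R L hR hL
end

section
/- In an intra-regular LA-semigroup S with left identity, a nonempty subset A is a (1,2)-ideal of S (A² ⊆ A and (AS)A² ⊆ A) if and only if A is a two-sided ideal of S (SA ⊆ A and AS ⊆ A). -/
/-!
Everything rests on two identities valid in an intra-regular LA-semigroup with left identity:
writing `a = (x a²) y`, one finds `s a = (a u) a²` and `a s = w a` for suitable `u, w`.
The first puts `S A` inside `(A S) A²`, so a (1,2)-ideal is a left ideal; the second puts `A S`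
inside `S A`, so a left ideal is a right ideal. The converse inclusions need no laws at all.
-/

open Pointwise

section LASemigroup

variable {S : Type*} [Mul S]

theorem LASemigroup.medial_s19 (linv : ∀ a b c : S, (a * b) * c = (c * b) * a) (a b c d : S) :
    (a * b) * (c * d) = (a * c) * (b * d) := by
  rw [linv a b (c * d), linv c d b, linv (b * d) c a]

theorem LASemigroup.mul_left_comm_s19 (linv : ∀ a b c : S, (a * b) * c = (c * b) * a)
    {e : S} (he : ∀ a : S, e * a = a) (a b c : S) : a * (b * c) = b * (a * c) := by
  calc a * (b * c) = (e * a) * (e * b * c) := by rw [he, he]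
    _ = (e * (e * b)) * (a * c) := LASemigroup.medial_s19 linv e a (e * b) c
    _ = b * (a * c) := by rw [he, he]

theorem LASemigroup.paramedial (linv : ∀ a b c : S, (a * b) * c = (c * b) * a)
    {e : S} (he : ∀ a : S, e * a = a) (a b c d : S) :
    (a * b) * (c * d) = (d * c) * (b * a) := by
  calc (a * b) * (c * d) = ((c * d) * b) * (e * a) := by rw [he, linv]
    _ = ((c * d) * e) * (b * a) := LASemigroup.medial_s19 linv (c * d) b e a
    _ = (d * c) * (b * a) := by rw [linv c d e, he]

theorem LASemigroup.exists_mul_eq_mul_mul_sq (linv : ∀ a b c : S, (a * b) * c = (c * b) * a)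
    {e : S} (he : ∀ a : S, e * a = a) (hintra : ∀ a : S, ∃ x y : S, a = (x * (a * a)) * y)
    (s a : S) : ∃ u, s * a = (a * u) * (a * a) := by
  obtain ⟨x, y, hxy⟩ := hintra a
  have mul_eq_sq_mul (t : S) : t * a = (a * a) * ((y * t) * x) := by
    calc t * a = t * ((x * (a * a)) * y) := by rw [← hxy]
      _ = (x * (a * a)) * (t * y) := LASemigroup.mul_left_comm_s19 linv he _ _ _
      _ = (y * t) * ((a * a) * x) := LASemigroup.paramedial linv he _ _ _ _
      _ = (a * a) * ((y * t) * x) := LASemigroup.mul_left_comm_s19 linv he _ _ _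
  set u := (y * ((y * s) * x)) * x
  refine ⟨u, ?_⟩
  calc s * a = (a * a) * ((y * s) * x) := mul_eq_sq_mul s
    _ = (((y * s) * x) * a) * a := linv a a _
    _ = ((u * a) * a) * a := by rw [mul_eq_sq_mul ((y * s) * x), linv a a u]
    _ = (a * a) * (u * a) := linv _ a a
    _ = (a * u) * (a * a) := LASemigroup.medial_s19 linv a a u a

theorem LASemigroup.exists_mul_eq_mul (linv : ∀ a b c : S, (a * b) * c = (c * b) * a)
    {e : S} (he : ∀ a : S, e * a = a) (hintra : ∀ a : S, ∃ x y : S, a = (x * (a * a)) * y)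
    (a s : S) : ∃ w, a * s = w * a := by
  obtain ⟨x, y, hxy⟩ := hintra a
  refine ⟨(x * (y * s)) * a, ?_⟩
  calc a * s = ((x * (a * a)) * y) * s := by rw [← hxy]
    _ = x * ((s * y) * (a * a)) := by rw [linv, LASemigroup.mul_left_comm_s19 linv he]
    _ = (a * a) * (x * (y * s)) := by
      rw [LASemigroup.paramedial linv he s y a a, LASemigroup.mul_left_comm_s19 linv he]
    _ = ((x * (y * s)) * a) * a := linv a a _

theorem LASemigroup.univ_mul_subset_of_mul_univ_mul_sq_subset
    (linv : ∀ a b c : S, (a * b) * c = (c * b) * a)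
    {e : S} (he : ∀ a : S, e * a = a) (hintra : ∀ a : S, ∃ x y : S, a = (x * (a * a)) * y)
    {A : Set S} (hA : (A * Set.univ) * (A * A) ⊆ A) : Set.univ * A ⊆ A := by
  rintro _ ⟨s, -, a, ha, rfl⟩
  obtain ⟨u, hu⟩ := LASemigroup.exists_mul_eq_mul_mul_sq linv he hintra s a
  simp only [hu]
  exact hA (Set.mul_mem_mul (Set.mul_mem_mul ha (Set.mem_univ u)) (Set.mul_mem_mul ha ha))

theorem LASemigroup.mul_univ_subset_of_univ_mul_subset
    (linv : ∀ a b c : S, (a * b) * c = (c * b) * a)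
    {e : S} (he : ∀ a : S, e * a = a) (hintra : ∀ a : S, ∃ x y : S, a = (x * (a * a)) * y)
    {A : Set S} (hA : Set.univ * A ⊆ A) : A * Set.univ ⊆ A := by
  rintro _ ⟨a, ha, s, -, rfl⟩
  obtain ⟨w, hw⟩ := LASemigroup.exists_mul_eq_mul linv he hintra a s
  simp only [hw]
  exact hA (Set.mul_mem_mul (Set.mem_univ w) ha)

end LASemigroup

theorem one_two_ideal_iff_two_sided_general {S : Type*} [Mul S]
    (linv : ∀ a b c : S, (a * b) * c = (c * b) * a)
    (e : S) (he : ∀ a : S, e * a = a)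
    (hintra : ∀ a : S, ∃ x y : S, a = (x * (a * a)) * y)
    (A : Set S) :
    (A * A ⊆ A ∧ (A * (Set.univ : Set S)) * (A * A) ⊆ A) ↔
    ((Set.univ : Set S) * A ⊆ A ∧ A * (Set.univ : Set S) ⊆ A) := by
  constructor
  · rintro ⟨-, hA⟩
    have hleft := LASemigroup.univ_mul_subset_of_mul_univ_mul_sq_subset linv he hintra hA
    exact ⟨hleft, LASemigroup.mul_univ_subset_of_univ_mul_subset linv he hintra hleft⟩
  · rintro ⟨hleft, hright⟩
    exact ⟨(Set.mul_subset_mul_right (Set.subset_univ A)).trans hleft,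
      (Set.mul_subset_mul hright (Set.subset_univ _)).trans hright⟩

/-- In an intra-regular LA-semigroup with left identity, a nonempty subset
is a (1,2)-ideal iff it is a two-sided ideal. -/
theorem one_two_ideal_iff_two_sided {S : Type*} [Mul S]
    (linv : ∀ a b c : S, (a * b) * c = (c * b) * a)
    (e : S) (he : ∀ a : S, e * a = a)
    (hintra : ∀ a : S, ∃ x y : S, a = (x * (a * a)) * y)
    (A : Set S) (hAne : A.Nonempty) :
    (A * A ⊆ A ∧ (A * (Set.univ : Set S)) * (A * A) ⊆ A) ↔
    ((Set.univ : Set S) * A ⊆ A ∧ A * (Set.univ : Set S) ⊆ A) :=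
  one_two_ideal_iff_two_sided_general linv e he hintra A
end
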